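/- Let n ≥ 5 and let S and T be standard Young tableaux with n entries. If the multiset of 1-minors of S equals the multiset of 1-minors of T, then S = T. (Any standard Young tableau with at least 5 entries can be reconstructed from its multiset of 1-minors.) -/

import Mathlib

/-- A standard Young tableau with `n` entries, encoded by its entry function
`entry : ℕ × ℕ → ℕ`: `entry (i, j) = 0` means there is no cell in row `i` and
column `j` (both 0-indexed), and otherwise `entry (i, j)` is the label
(one of `1, …, n`) of the cell `(i, j)`.  Rows increase from left to right and
columns increase from top to bottom. -/
structure SYT (n : ℕ) where
  entry : ℕ × ℕ → ℕ
  /-- the set of cells is the Young diagram of a partition -/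
  diagram : ∀ i j i' j', i' ≤ i → j' ≤ j → entry (i, j) ≠ 0 → entry (i', j') ≠ 0
  /-- every label is at most `n` -/
  le_n : ∀ c, entry c ≤ n
  /-- every label in `1, …, n` appears in some cell -/
  exists_cell : ∀ k, 1 ≤ k → k ≤ n → ∃ c, entry c = k
  /-- each label appears in at most one cell -/
  inj : ∀ c c', entry c ≠ 0 → entry c = entry c' → c = c'
  /-- rows increase from left to right -/
  row_lt : ∀ i j, entry (i, j + 1) ≠ 0 → entry (i, j) < entry (i, j + 1)
  /-- columns increase from top to bottom -/
  col_lt : ∀ i j, entry (i + 1, j) ≠ 0 → entry (i, j) < entry (i + 1, j)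

/-- The shape (set of cells) of an entry function. -/
def shapeOf (f : ℕ × ℕ → ℕ) : Set (ℕ × ℕ) := {c | f c ≠ 0}

/-- The shape of a standard Young tableau: the set of cells of its
underlying Young diagram. -/
def SYT.shape {n : ℕ} (T : SYT n) : Set (ℕ × ℕ) := shapeOf T.entry

/-- `c` is an outer corner: a cell with no cell immediately to its right and
no cell immediately below it. -/
def IsOuterCorner (f : ℕ × ℕ → ℕ) (c : ℕ × ℕ) : Prop :=
  f c ≠ 0 ∧ f (c.1, c.2 + 1) = 0 ∧ f (c.1 + 1, c.2) = 0

/-- Jeu de taquin sliding: starting with a vacant cell `c`, repeatedly slide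
into the vacant cell the smaller of the entries immediately to the right of and
immediately below it, until neither exists.  `fuel` bounds the number of steps;
any `fuel ≥ n` suffices for a tableau with `n` entries, and extra fuel does not
change the result once the process has terminated. -/
def jdtAux : ℕ → (ℕ × ℕ → ℕ) → ℕ × ℕ → (ℕ × ℕ → ℕ)
  | 0, f, _ => f
  | fuel + 1, f, c =>
    let r := f (c.1, c.2 + 1)
    let b := f (c.1 + 1, c.2)
    if r = 0 ∧ b = 0 then f
    else if b = 0 ∨ (r ≠ 0 ∧ r < b) then
      jdtAux fuel (Function.update (Function.update f c r) (c.1, c.2 + 1) 0) (c.1, c.2 + 1)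
    else
      jdtAux fuel (Function.update (Function.update f c b) (c.1 + 1, c.2) 0) (c.1 + 1, c.2)

open Classical

/-- Deletion of the entry `m` from an entry function: vacate the cell
containing `m`, perform the jeu de taquin sliding process, and then renumber
each entry `p > m` to `p - 1`. -/
noncomputable def delRaw (fuel : ℕ) (f : ℕ × ℕ → ℕ) (m : ℕ) : ℕ × ℕ → ℕ :=
  if h : 0 < m ∧ ∃ c, f c = m then
    let g := jdtAux fuel (Function.update f (Classical.choose h.2) 0) (Classical.choose h.2)
    fun x => if m < g x then g x - 1 else g x
  else f

/-- The 1-minor `T - m` of a standard Young tableau `T` with `n` entries,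
as an entry function (a standard Young tableau with `n - 1` entries). -/
noncomputable def SYT.del {n : ℕ} (T : SYT n) (m : ℕ) : ℕ × ℕ → ℕ :=
  delRaw n T.entry m

/-- The set of 1-minors `M¹(T) = {T - m : 1 ≤ m ≤ n}` of `T`. -/
noncomputable def minors1 {n : ℕ} (T : SYT n) : Set (ℕ × ℕ → ℕ) :=
  {g | ∃ m, 1 ≤ m ∧ m ≤ n ∧ g = T.del m}

/-- The multiset of 1-minors `⟦T - m : 1 ≤ m ≤ n⟧` of `T`,
counted with multiplicities. -/
noncomputable def minors1M {n : ℕ} (T : SYT n) : Multiset (ℕ × ℕ → ℕ) :=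
  (Finset.Icc 1 n).val.map T.del



/-! ### Basic SYT lemmas -/

lemma SYT.entry_mono_right {n : ℕ} (T : SYT n) (i j j' : ℕ) (hj : j' ≤ j)
    (h : T.entry (i, j) ≠ 0) : T.entry (i, j') ≤ T.entry (i, j) := by
  induction j with
  | zero => interval_cases j'; exact le_rfl
  | succ k ih =>
    rcases Nat.lt_or_ge j' (k+1) with hlt | hge
    · have hk : T.entry (i, k) ≠ 0 := T.diagram i (k+1) i k le_rfl (Nat.le_succ k) h
      exact le_trans (ih (Nat.lt_succ_iff.mp hlt) hk) (le_of_lt (T.row_lt i k h))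
    · have : j' = k+1 := le_antisymm hj hge
      subst this; exact le_rfl

lemma SYT.entry_mono_down {n : ℕ} (T : SYT n) (i i' j : ℕ) (hi : i' ≤ i)
    (h : T.entry (i, j) ≠ 0) : T.entry (i', j) ≤ T.entry (i, j) := by
  induction i with
  | zero => interval_cases i'; exact le_rfl
  | succ k ih =>
    rcases Nat.lt_or_ge i' (k+1) with hlt | hge
    · have hk : T.entry (k, j) ≠ 0 := T.diagram (k+1) j k j (Nat.le_succ k) le_rfl h
      exact le_trans (ih (Nat.lt_succ_iff.mp hlt) hk) (le_of_lt (T.col_lt k j h))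
    · have : i' = k+1 := le_antisymm hi hge
      subst this; exact le_rfl

lemma SYT.entry_mono {n : ℕ} (T : SYT n) (i j i' j' : ℕ) (hi : i' ≤ i) (hj : j' ≤ j)
    (h : T.entry (i, j) ≠ 0) : T.entry (i', j') ≤ T.entry (i, j) := by
  have h' : T.entry (i', j) ≠ 0 := T.diagram i j i' j hi le_rfl h
  exact le_trans (T.entry_mono_right i' j j' hj h') (T.entry_mono_down i i' j hi h)

/-- the diagonal bound: a nonzero cell `(i,j)` satisfies `i + j + 1 ≤ n`. -/
lemma SYT.diag_bound {n : ℕ} (T : SYT n) (i j : ℕ) (h : T.entry (i, j) ≠ 0) :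
    i + j + 1 ≤ n := by
  -- chain (0,0),(1,0),…,(i,0),(i,1),…,(i,j)
  set v : ℕ → ℕ := fun k => if k ≤ i then T.entry (k, 0) else T.entry (i, k - i) with hv
  have hcell : ∀ k, k ≤ i + j → T.entry (if k ≤ i then ((k:ℕ), (0:ℕ)) else (i, k - i)) ≠ 0 := by
    intro k hk
    split
    · exact T.diagram i j _ 0 (by omega) (by omega) h
    · exact T.diagram i j i (k - i) le_rfl (by omega) h
  have hstep : ∀ k, k + 1 ≤ i + j → v k < v (k+1) := by
    intro k hk
    have hk1 := hcell (k+1) hk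
    by_cases hki : k + 1 ≤ i
    · have : k ≤ i := by omega
      simp only [hv, hki, this, if_pos] at *
      exact T.col_lt k 0 (by simpa using hk1)
    · by_cases hki' : k ≤ i
      · -- k = i, k+1 = i+1 : from (i,0) to (i,1)
        have hkeq : k = i := by omega
        subst hkeq
        simp only [hv, if_pos hki', if_neg hki]
        have : k + 1 - k = 1 := by omega
        rw [this]
        refine T.row_lt k 0 ?_
        simpa [this] using (by simpa [hki] using hk1 : T.entry (k, k+1-k) ≠ 0)
      · simp only [hv, if_neg hki, if_neg hki']
        have h2 : k + 1 - i = (k - i) + 1 := by omega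
        rw [h2]
        refine T.row_lt i (k - i) ?_
        rw [← h2]; simpa [hki] using hk1
  have hmono : ∀ k, k ≤ i + j → v 0 + k ≤ v k := by
    intro k
    induction k with
    | zero => simp
    | succ l ih =>
      intro hk
      have := hstep l hk
      have := ih (by omega)
      omega
  have h0 : 1 ≤ v 0 := by
    have : T.entry (0, 0) ≠ 0 := T.diagram i j 0 0 (by omega) (by omega) h
    simp only [hv, if_pos (Nat.zero_le i)]
    omega
  have hlast : v (i + j) ≤ n := by
    simp only [hv]; split <;> exact T.le_n _
  have := hmono (i + j) le_rfl
  omega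

lemma SYT.cell_unique {n : ℕ} (T : SYT n) {c c' : ℕ × ℕ} {m : ℕ} (hm : m ≠ 0)
    (h : T.entry c = m) (h' : T.entry c' = m) : c = c' := by
  exact T.inj c c' (by rw [h]; exact hm) (by rw [h, h'])

lemma SYT.entry_one {n : ℕ} (T : SYT n) (hn : 1 ≤ n) : T.entry (0, 0) = 1 := by
  obtain ⟨⟨i, j⟩, hc⟩ := T.exists_cell 1 le_rfl hn
  have hne : T.entry (i, j) ≠ 0 := by omega
  have h0 : T.entry (0, 0) ≠ 0 := T.diagram i j 0 0 (Nat.zero_le _) (Nat.zero_le _) hne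
  have := T.entry_mono i j 0 0 (Nat.zero_le _) (Nat.zero_le _) hne
  omega


/-! ### jdtAux lemmas -/

lemma jdtAux_succ (fuel : ℕ) (f : ℕ × ℕ → ℕ) (c : ℕ × ℕ) :
    jdtAux (fuel + 1) f c =
      if f (c.1, c.2 + 1) = 0 ∧ f (c.1 + 1, c.2) = 0 then f
      else if f (c.1 + 1, c.2) = 0 ∨ (f (c.1, c.2 + 1) ≠ 0 ∧ f (c.1, c.2 + 1) < f (c.1 + 1, c.2)) then
        jdtAux fuel (Function.update (Function.update f c (f (c.1, c.2 + 1))) (c.1, c.2 + 1) 0) (c.1, c.2 + 1)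
      else
        jdtAux fuel (Function.update (Function.update f c (f (c.1 + 1, c.2))) (c.1 + 1, c.2) 0) (c.1 + 1, c.2) := rfl

lemma jdtAux_stop (fuel : ℕ) (f : ℕ × ℕ → ℕ) (c : ℕ × ℕ)
    (h1 : f (c.1, c.2 + 1) = 0) (h2 : f (c.1 + 1, c.2) = 0) :
    jdtAux fuel f c = f := by
  cases fuel with
  | zero => rfl
  | succ k => rw [jdtAux_succ]; simp [h1, h2]

lemma jdtAux_le (N : ℕ) : ∀ (fuel : ℕ) (f : ℕ × ℕ → ℕ) (c : ℕ × ℕ),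
    (∀ x, f x ≤ N) → ∀ x, jdtAux fuel f c x ≤ N := by
  intro fuel
  induction fuel with
  | zero => intro f c hf; exact hf
  | succ k ih =>
    intro f c hf x
    rw [jdtAux_succ]
    split
    · exact hf x
    · split
      · refine ih _ _ ?_ x
        intro y
        rcases eq_or_ne y (c.1, c.2 + 1) with rfl | hy
        · simp
        · rw [Function.update_of_ne hy]
          rcases eq_or_ne y c with rfl | hy'
          · simp [hf]
          · rw [Function.update_of_ne hy']; exact hf y
      · refine ih _ _ ?_ x
        intro y
        rcases eq_or_ne y (c.1 + 1, c.2) with rfl | hy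
        · simp
        · rw [Function.update_of_ne hy]
          rcases eq_or_ne y c with rfl | hy'
          · simp [hf]
          · rw [Function.update_of_ne hy']; exact hf y

lemma jdtAux_supp : ∀ (fuel : ℕ) (f : ℕ × ℕ → ℕ) (c : ℕ × ℕ) (x : ℕ × ℕ),
    jdtAux fuel f c x ≠ 0 → f x ≠ 0 ∨ x = c := by
  intro fuel
  induction fuel with
  | zero => intro f c x h; exact Or.inl h
  | succ k ih =>
    intro f c x h
    rw [jdtAux_succ] at h
    split at h
    · exact Or.inl h
    · split at h
      · rcases ih _ _ _ h with h' | rfl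
        · rcases eq_or_ne x (c.1, c.2 + 1) with rfl | hx
          · simp at h'
          · rw [Function.update_of_ne hx] at h'
            rcases eq_or_ne x c with rfl | hx'
            · exact Or.inr rfl
            · rw [Function.update_of_ne hx'] at h'; exact Or.inl h'
        · left
          -- x = (c.1, c.2+1) and in this branch f x ≠ 0
          rename_i hcond hbr
          rcases hbr with hb | ⟨hr, _⟩
          · by_contra hfx
            exact hcond ⟨hfx, hb⟩
          · exact hr
      · rcases ih _ _ _ h with h' | rfl
        · rcases eq_or_ne x (c.1 + 1, c.2) with rfl | hx
          · simp at h'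
          · rw [Function.update_of_ne hx] at h'
            rcases eq_or_ne x c with rfl | hx'
            · exact Or.inr rfl
            · rw [Function.update_of_ne hx'] at h'; exact Or.inl h'
        · left
          rename_i hcond hbr
          push_neg at hbr
          exact hbr.1

lemma jdtAux_fuel (C : ℕ) : ∀ (fuel₁ fuel₂ : ℕ) (f : ℕ × ℕ → ℕ) (c : ℕ × ℕ),
    (∀ x, f x ≠ 0 → x.1 + x.2 + 1 ≤ C) →
    C ≤ c.1 + c.2 + fuel₁ → C ≤ c.1 + c.2 + fuel₂ →
    jdtAux fuel₁ f c = jdtAux fuel₂ f c := by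
  intro fuel₁
  induction fuel₁ with
  | zero =>
    intro fuel₂ f c hf h1 h2
    have hr : f (c.1, c.2 + 1) = 0 := by
      by_contra hne
      have := hf _ hne; simp at this; omega
    have hb : f (c.1 + 1, c.2) = 0 := by
      by_contra hne
      have := hf _ hne; simp at this; omega
    rw [jdtAux_stop fuel₂ f c hr hb]; rfl
  | succ k ih =>
    intro fuel₂ f c hf h1 h2
    cases fuel₂ with
    | zero =>
      have hr : f (c.1, c.2 + 1) = 0 := by
        by_contra hne
        have := hf _ hne; simp at this; omega
      have hb : f (c.1 + 1, c.2) = 0 := by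
        by_contra hne
        have := hf _ hne; simp at this; omega
      rw [jdtAux_stop (k+1) f c hr hb]; rfl
    | succ l =>
      rw [jdtAux_succ, jdtAux_succ]
      split
      · rfl
      · rename_i hcond
        have key : ∀ (d : ℕ × ℕ) (v : ℕ), f d = v → v ≠ 0 → d.1 + d.2 = c.1 + c.2 + 1 →
            (∀ x, (Function.update (Function.update f c v) d 0) x ≠ 0 → x.1 + x.2 + 1 ≤ C) := by
          intro d v hd hv hsum x hx
          rcases eq_or_ne x d with rfl | hxd
          · simp at hx
          · rw [Function.update_of_ne hxd] at hx
            rcases eq_or_ne x c with rfl | hxc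
            · have := hf d (by rw [hd]; exact hv)
              omega
            · rw [Function.update_of_ne hxc] at hx
              exact hf x hx
        split
        · rename_i hbr
          have hr : f (c.1, c.2 + 1) ≠ 0 := by
            rcases hbr with hb | ⟨hr, _⟩
            · by_contra hfx; exact hcond ⟨hfx, hb⟩
            · exact hr
          exact ih l _ _ (key (c.1, c.2 + 1) _ rfl hr (by simp; omega))
            (by simp; omega) (by simp; omega)
        · rename_i hbr
          push_neg at hbr
          exact ih l _ _ (key (c.1 + 1, c.2) _ rfl hbr.1 (by simp; omega))
            (by simp; omega) (by simp; omega)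
/-! ### restriction and the slide-restriction commutation -/

/-- keep only entries `≤ k` -/
def restrict (k : ℕ) (f : ℕ × ℕ → ℕ) : ℕ × ℕ → ℕ := fun x => if f x ≤ k then f x else 0

lemma restrict_apply (k : ℕ) (f : ℕ × ℕ → ℕ) (x : ℕ × ℕ) :
    restrict k f x = if f x ≤ k then f x else 0 := rfl

lemma restrict_restrict (k l : ℕ) (hkl : k ≤ l) (f : ℕ × ℕ → ℕ) :
    restrict k (restrict l f) = restrict k f := by
  funext x
  simp only [restrict]
  split_ifs <;> omega

lemma restrict_update (j : ℕ) (f : ℕ × ℕ → ℕ) (a : ℕ × ℕ) (v : ℕ) (hv : v ≤ j) :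
    restrict j (Function.update f a v) = Function.update (restrict j f) a v := by
  funext x
  rcases eq_or_ne x a with rfl | hx
  · simp [restrict, hv]
  · simp [restrict, Function.update_of_ne hx]

/-- The invariant: all entries greater than `j` sit at outer corners away from the hole `c`. -/
def BigInv (j : ℕ) (f : ℕ × ℕ → ℕ) (c : ℕ × ℕ) : Prop :=
  ∀ x : ℕ × ℕ, j < f x →
    f (x.1, x.2 + 1) = 0 ∧ f (x.1 + 1, x.2) = 0 ∧ x ≠ c ∧ (x.1, x.2 + 1) ≠ c ∧ (x.1 + 1, x.2) ≠ c

lemma ne_right_self (d : ℕ × ℕ) : (d.1, d.2 + 1) ≠ d := by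
  intro h; have := congrArg Prod.snd h; simp at this

lemma ne_below_self (d : ℕ × ℕ) : (d.1 + 1, d.2) ≠ d := by
  intro h; have := congrArg Prod.fst h; simp at this

section commute
variable {j : ℕ} {f : ℕ × ℕ → ℕ} {c d : ℕ × ℕ}

lemma biginv_step (hinv : BigInv j f c) (hd : f d ≠ 0) (hdj : f d ≤ j) (_ : d ≠ c) :
    BigInv j (Function.update (Function.update f c (f d)) d 0) d := by
  intro x hx
  have hxd : x ≠ d := by
    intro rfl'; subst rfl'; simp at hx
  rw [Function.update_of_ne hxd] at hx
  have hxc : x ≠ c := by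
    intro rfl'; subst rfl'; simp at hx; omega
  rw [Function.update_of_ne hxc] at hx
  obtain ⟨h1, h2, h3, h4, h5⟩ := hinv x hx
  have hr_ne_d : (x.1, x.2 + 1) ≠ d := by intro h; rw [← h] at hd; exact hd h1
  have hb_ne_d : (x.1 + 1, x.2) ≠ d := by intro h; rw [← h] at hd; exact hd h2
  refine ⟨?_, ?_, hxd, hr_ne_d, hb_ne_d⟩
  · rw [Function.update_of_ne hr_ne_d, Function.update_of_ne h4]; exact h1
  · rw [Function.update_of_ne hb_ne_d, Function.update_of_ne h5]; exact h2

lemma restrict_step (hdj : f d ≤ j) :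
    restrict j (Function.update (Function.update f c (f d)) d 0) =
      Function.update (Function.update (restrict j f) c (f d)) d 0 := by
  rw [restrict_update j _ d 0 (Nat.zero_le j), restrict_update j f c (f d) hdj]

lemma hole_after_step : (Function.update (Function.update f c (f d)) d 0) d = 0 := by simp

/-- terminal case: a big value is pulled into the hole; nothing `≤ j` moves. -/
lemma big_pull (fuel : ℕ) (hinv : BigInv j f c) (hc : f c = 0) (hdj : j < f d) :
    restrict j (jdtAux fuel (Function.update (Function.update f c (f d)) d 0) d) =
      restrict j f := by
  obtain ⟨h1, h2, h3, h4, h5⟩ := hinv d hdj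
  have hstop : jdtAux fuel (Function.update (Function.update f c (f d)) d 0) d
      = Function.update (Function.update f c (f d)) d 0 := by
    refine jdtAux_stop _ _ _ ?_ ?_
    · rw [Function.update_of_ne (ne_right_self d), Function.update_of_ne h4]; exact h1
    · rw [Function.update_of_ne (ne_below_self d), Function.update_of_ne h5]; exact h2
  rw [hstop]
  funext x
  rcases eq_or_ne x d with rfl | hxd
  · simp only [restrict, Function.update_self]
    rw [if_pos (Nat.zero_le j), if_neg (by omega)]
  · rw [restrict_apply, Function.update_of_ne hxd]
    rcases eq_or_ne x c with rfl | hxc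
    · simp only [Function.update_self]
      rw [if_neg (by omega), restrict_apply, hc, if_pos (Nat.zero_le j)]
    · rw [Function.update_of_ne hxc, restrict_apply]

lemma jdt_restrict (j : ℕ) : ∀ (fuel : ℕ) (f : ℕ × ℕ → ℕ) (c : ℕ × ℕ),
    f c = 0 → BigInv j f c →
    restrict j (jdtAux fuel f c) = jdtAux fuel (restrict j f) c := by
  intro fuel
  induction fuel with
  | zero => intro f c _ _; rfl
  | succ k ih =>
    intro f c hc hinv
    rw [jdtAux_succ, jdtAux_succ]
    have hrc_ne : ((c.1, c.2 + 1) : ℕ × ℕ) ≠ c := ne_right_self c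
    have hbc_ne : ((c.1 + 1, c.2) : ℕ × ℕ) ≠ c := ne_below_self c
    by_cases hrj : f (c.1, c.2 + 1) ≤ j
    · by_cases hbj : f (c.1 + 1, c.2) ≤ j
      · -- both small: identical branching on both sides
        rw [show restrict j f (c.1, c.2 + 1) = f (c.1, c.2 + 1) by rw [restrict_apply, if_pos hrj],
            show restrict j f (c.1 + 1, c.2) = f (c.1 + 1, c.2) by rw [restrict_apply, if_pos hbj]]
        by_cases hzero : f (c.1, c.2 + 1) = 0 ∧ f (c.1 + 1, c.2) = 0
        · rw [if_pos hzero, if_pos hzero]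
        · rw [if_neg hzero, if_neg hzero]
          by_cases hbr : f (c.1 + 1, c.2) = 0 ∨ (f (c.1, c.2 + 1) ≠ 0 ∧ f (c.1, c.2 + 1) < f (c.1 + 1, c.2))
          · rw [if_pos hbr, if_pos hbr]
            have hr0 : f (c.1, c.2 + 1) ≠ 0 := by
              rcases hbr with hb | ⟨hr, _⟩
              · exact fun h => hzero ⟨h, hb⟩
              · exact hr
            rw [← restrict_step hrj]
            exact ih _ _ hole_after_step (biginv_step hinv hr0 hrj hrc_ne)
          · rw [if_neg hbr, if_neg hbr]
            have hb0 : f (c.1 + 1, c.2) ≠ 0 := by tauto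
            rw [← restrict_step hbj]
            exact ih _ _ hole_after_step (biginv_step hinv hb0 hbj hbc_ne)
      · -- r small, b big
        have hb0 : f (c.1 + 1, c.2) ≠ 0 := by omega
        rw [show restrict j f (c.1, c.2 + 1) = f (c.1, c.2 + 1) by rw [restrict_apply, if_pos hrj],
            show restrict j f (c.1 + 1, c.2) = 0 by rw [restrict_apply, if_neg hbj]]
        rw [if_neg (show ¬(f (c.1, c.2 + 1) = 0 ∧ f (c.1 + 1, c.2) = 0) by tauto)]
        by_cases hr0 : f (c.1, c.2 + 1) = 0
        · -- f side: bottom branch pulling big b, restricted side stops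
          rw [if_neg (show ¬(f (c.1 + 1, c.2) = 0 ∨ (f (c.1, c.2 + 1) ≠ 0 ∧ f (c.1, c.2 + 1) < f (c.1 + 1, c.2))) by
                push_neg; exact ⟨hb0, fun h => absurd hr0 h⟩)]
          rw [if_pos (show f (c.1, c.2 + 1) = 0 ∧ (0 : ℕ) = 0 from ⟨hr0, rfl⟩)]
          exact big_pull k hinv hc (show j < f (c.1 + 1, c.2) by omega)
        · -- both right branch
          rw [if_pos (show f (c.1 + 1, c.2) = 0 ∨ (f (c.1, c.2 + 1) ≠ 0 ∧ f (c.1, c.2 + 1) < f (c.1 + 1, c.2)) from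
                Or.inr ⟨hr0, by omega⟩)]
          rw [if_neg (show ¬(f (c.1, c.2 + 1) = 0 ∧ (0 : ℕ) = 0) from fun h => hr0 h.1)]
          rw [if_pos (show (0 : ℕ) = 0 ∨ (f (c.1, c.2 + 1) ≠ 0 ∧ f (c.1, c.2 + 1) < 0) from Or.inl rfl)]
          rw [← restrict_step hrj]
          exact ih _ _ hole_after_step (biginv_step hinv hr0 hrj hrc_ne)
    · -- r big
      have hr0 : f (c.1, c.2 + 1) ≠ 0 := by omega
      rw [show restrict j f (c.1, c.2 + 1) = 0 by rw [restrict_apply, if_neg hrj]]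
      by_cases hbj : f (c.1 + 1, c.2) ≤ j
      · rw [show restrict j f (c.1 + 1, c.2) = f (c.1 + 1, c.2) by rw [restrict_apply, if_pos hbj]]
        rw [if_neg (show ¬(f (c.1, c.2 + 1) = 0 ∧ f (c.1 + 1, c.2) = 0) by tauto)]
        by_cases hb0 : f (c.1 + 1, c.2) = 0
        · -- f side: right branch pulling big r; restricted: stop
          rw [if_pos (show f (c.1 + 1, c.2) = 0 ∨ (f (c.1, c.2 + 1) ≠ 0 ∧ f (c.1, c.2 + 1) < f (c.1 + 1, c.2)) from
                Or.inl hb0)]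
          rw [if_pos (show (0 : ℕ) = 0 ∧ f (c.1 + 1, c.2) = 0 from ⟨rfl, hb0⟩)]
          exact big_pull k hinv hc (show j < f (c.1, c.2 + 1) by omega)
        · -- both bottom branch
          rw [if_neg (show ¬(f (c.1 + 1, c.2) = 0 ∨ (f (c.1, c.2 + 1) ≠ 0 ∧ f (c.1, c.2 + 1) < f (c.1 + 1, c.2))) by
                push_neg; exact ⟨hb0, fun _ => by omega⟩)]
          rw [if_neg (show ¬((0 : ℕ) = 0 ∧ f (c.1 + 1, c.2) = 0) from fun h => hb0 h.2)]
          rw [if_neg (show ¬(f (c.1 + 1, c.2) = 0 ∨ ((0 : ℕ) ≠ 0 ∧ 0 < f (c.1 + 1, c.2))) by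
                push_neg; exact ⟨hb0, fun h => absurd rfl h⟩)]
          rw [← restrict_step hbj]
          exact ih _ _ hole_after_step (biginv_step hinv hb0 hbj hbc_ne)
      · -- both big
        have hb0 : f (c.1 + 1, c.2) ≠ 0 := by omega
        rw [show restrict j f (c.1 + 1, c.2) = 0 by rw [restrict_apply, if_neg hbj]]
        rw [if_neg (show ¬(f (c.1, c.2 + 1) = 0 ∧ f (c.1 + 1, c.2) = 0) by tauto)]
        rw [if_pos (show (0 : ℕ) = 0 ∧ (0 : ℕ) = 0 from ⟨rfl, rfl⟩)]
        split
        · exact big_pull k hinv hc (show j < f (c.1, c.2 + 1) by omega)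
        · exact big_pull k hinv hc (show j < f (c.1 + 1, c.2) by omega)

end commute
/-! ### delRaw with explicit cell, and basic consequences -/

lemma jdtAux_pred (P : ℕ → Prop) (hP0 : P 0) : ∀ (fuel : ℕ) (f : ℕ × ℕ → ℕ) (c : ℕ × ℕ),
    (∀ x, P (f x)) → ∀ x, P (jdtAux fuel f c x) := by
  intro fuel
  induction fuel with
  | zero => intro f c hf; exact hf
  | succ k ih =>
    intro f c hf x
    rw [jdtAux_succ]
    split
    · exact hf x
    · split
      · refine ih _ _ ?_ x
        intro y
        rcases eq_or_ne y (c.1, c.2 + 1) with rfl | hy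
        · rw [Function.update_self]; exact hP0
        · rw [Function.update_of_ne hy]
          rcases eq_or_ne y c with rfl | hy'
          · rw [Function.update_self]; exact hf _
          · rw [Function.update_of_ne hy']; exact hf y
      · refine ih _ _ ?_ x
        intro y
        rcases eq_or_ne y (c.1 + 1, c.2) with rfl | hy
        · rw [Function.update_self]; exact hP0
        · rw [Function.update_of_ne hy]
          rcases eq_or_ne y c with rfl | hy'
          · rw [Function.update_self]; exact hf _
          · rw [Function.update_of_ne hy']; exact hf y

lemma delRaw_eq (fuel : ℕ) (f : ℕ × ℕ → ℕ) (m : ℕ) (c : ℕ × ℕ) (h0 : 0 < m) (hc : f c = m)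
    (huniq : ∀ c', f c' = m → c' = c) :
    delRaw fuel f m = fun x =>
      if m < jdtAux fuel (Function.update f c 0) c x then jdtAux fuel (Function.update f c 0) c x - 1
      else jdtAux fuel (Function.update f c 0) c x := by
  have h : 0 < m ∧ ∃ c, f c = m := ⟨h0, c, hc⟩
  rw [delRaw, dif_pos h]
  have hcc : Classical.choose h.2 = c := huniq _ (Classical.choose_spec h.2)
  simp only [hcc]

lemma delRaw_apply (fuel : ℕ) (f : ℕ × ℕ → ℕ) (m : ℕ) (c : ℕ × ℕ) (h0 : 0 < m) (hc : f c = m)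
    (huniq : ∀ c', f c' = m → c' = c) (x : ℕ × ℕ) :
    delRaw fuel f m x =
      if m < jdtAux fuel (Function.update f c 0) c x then jdtAux fuel (Function.update f c 0) c x - 1
      else jdtAux fuel (Function.update f c 0) c x := by
  rw [delRaw_eq fuel f m c h0 hc huniq]

section sytlemmas
variable {n : ℕ} (T : SYT n)

lemma SYT.ext_entry {S T : SYT n} (h : S.entry = T.entry) : S = T := by
  cases S; cases T; simpa using h

lemma SYT.cell_uniq {c : ℕ × ℕ} {m : ℕ} (h0 : 0 < m) (hc : T.entry c = m) :
    ∀ c', T.entry c' = m → c' = c := by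
  intro c' hc'
  exact T.cell_unique (by omega) hc' hc

/-- the cell of the top entry is an outer corner -/
lemma SYT.top_corner {c : ℕ × ℕ} (hc : T.entry c = n) (hn : 1 ≤ n) :
    T.entry (c.1, c.2 + 1) = 0 ∧ T.entry (c.1 + 1, c.2) = 0 := by
  constructor
  · by_contra hne
    have h1 := T.row_lt c.1 c.2 hne
    have h2 := T.le_n (c.1, c.2 + 1)
    rw [show ((c.1, c.2) : ℕ × ℕ) = c from rfl, hc] at h1
    omega
  · by_contra hne
    have h1 := T.col_lt c.1 c.2 hne
    have h2 := T.le_n (c.1 + 1, c.2)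
    rw [show ((c.1, c.2) : ℕ × ℕ) = c from rfl, hc] at h1
    omega

/-- deleting the top entry is plain restriction -/
lemma SYT.del_top (hn : 1 ≤ n) : T.del n = restrict (n - 1) T.entry := by
  obtain ⟨c, hc⟩ := T.exists_cell n hn le_rfl
  obtain ⟨hr, hb⟩ := T.top_corner hc hn
  rw [SYT.del, delRaw_eq n T.entry n c (by omega) hc (T.cell_uniq (by omega) hc)]
  have hstop : jdtAux n (Function.update T.entry c 0) c = Function.update T.entry c 0 := by
    refine jdtAux_stop _ _ _ ?_ ?_
    · rw [Function.update_of_ne (ne_right_self c)]; exact hr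
    · rw [Function.update_of_ne (ne_below_self c)]; exact hb
  rw [hstop]
  funext x
  rcases eq_or_ne x c with rfl | hx
  · simp only [Function.update_self, restrict_apply, hc]
    rw [if_neg (by omega), if_neg (by omega)]
  · rw [Function.update_of_ne hx, restrict_apply]
    have hle := T.le_n x
    have hne : T.entry x ≠ n := fun h => hx (T.cell_uniq (by omega) hc x h)
    rw [if_neg (by omega), if_pos (by omega)]

/-- cells of minors are cells of `T` -/
lemma SYT.del_supp {m : ℕ} (h1 : 1 ≤ m) (h2 : m ≤ n) (x : ℕ × ℕ)
    (h : T.del m x ≠ 0) : T.entry x ≠ 0 := by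
  obtain ⟨c, hc⟩ := T.exists_cell m h1 h2
  rw [SYT.del, delRaw_eq n T.entry m c (by omega) hc (T.cell_uniq (by omega) hc)] at h
  simp only at h
  have hg : jdtAux n (Function.update T.entry c 0) c x ≠ 0 := by
    intro h0; rw [h0] at h; simp at h
  rcases jdtAux_supp n _ c x hg with h' | rfl
  · rcases eq_or_ne x c with rfl | hx
    · rw [hc]; omega
    · rwa [Function.update_of_ne hx] at h'
  · rw [hc]; omega

/-- deleting the entry of an outer corner removes exactly that cell from the shape -/
lemma SYT.del_corner_supp {c : ℕ × ℕ} (hc0 : T.entry c ≠ 0)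
    (hr : T.entry (c.1, c.2 + 1) = 0) (hb : T.entry (c.1 + 1, c.2) = 0) (x : ℕ × ℕ) :
    T.del (T.entry c) x ≠ 0 ↔ (T.entry x ≠ 0 ∧ x ≠ c) := by
  rw [SYT.del, delRaw_eq n T.entry (T.entry c) c (by omega) rfl (T.cell_uniq (by omega) rfl)]
  have hstop : jdtAux n (Function.update T.entry c 0) c = Function.update T.entry c 0 := by
    refine jdtAux_stop _ _ _ ?_ ?_
    · rw [Function.update_of_ne (ne_right_self c)]; exact hr
    · rw [Function.update_of_ne (ne_below_self c)]; exact hb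
  rw [hstop]
  simp only
  rcases eq_or_ne x c with rfl | hx
  · simp
  · rw [Function.update_of_ne hx]
    constructor
    · intro h
      refine ⟨fun h0 => ?_, hx⟩
      rw [h0] at h; simp at h
    · intro ⟨h0, _⟩
      split <;> omega

end sytlemmas

/-! ### the restriction of an SYT -/

lemma restrict_ne_zero {k : ℕ} {f : ℕ × ℕ → ℕ} {x : ℕ × ℕ} (h : restrict k f x ≠ 0) :
    f x ≠ 0 ∧ f x ≤ k := by
  rw [restrict_apply] at h
  split at h
  · exact ⟨h, by assumption⟩
  · simp at h

/-- restriction of a standard Young tableau to its `n` smallest entries -/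
def restrictSYT {n : ℕ} (T : SYT (n + 1)) : SYT n where
  entry := restrict n T.entry
  diagram := by
    intro i j i' j' hi hj h
    obtain ⟨h0, hle⟩ := restrict_ne_zero h
    have h0' := T.diagram i j i' j' hi hj h0
    have hle' := T.entry_mono i j i' j' hi hj h0
    rw [restrict_apply, if_pos (by omega)]
    exact h0'
  le_n := by
    intro c
    rw [restrict_apply]
    split <;> omega
  exists_cell := by
    intro k h1 h2
    obtain ⟨c, hc⟩ := T.exists_cell k h1 (by omega)
    exact ⟨c, by rw [restrict_apply, hc, if_pos h2]⟩
  inj := by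
    intro c c' h h'
    obtain ⟨h0, hle⟩ := restrict_ne_zero h
    rw [restrict_apply, if_pos hle] at h h'
    by_cases hc' : T.entry c' ≤ n
    · rw [restrict_apply, if_pos hc'] at h'
      exact T.inj c c' h0 h'
    · rw [restrict_apply, if_neg hc'] at h'
      omega
  row_lt := by
    intro i j h
    obtain ⟨h0, hle⟩ := restrict_ne_zero h
    have hlt := T.row_lt i j h0
    simp only [restrict_apply]
    rw [if_pos hle, if_pos (show T.entry (i, j) ≤ n by omega)]
    exact hlt
  col_lt := by
    intro i j h
    obtain ⟨h0, hle⟩ := restrict_ne_zero h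
    have hlt := T.col_lt i j h0
    simp only [restrict_apply]
    rw [if_pos hle, if_pos (show T.entry (i, j) ≤ n by omega)]
    exact hlt

lemma restrictSYT_entry {n : ℕ} (T : SYT (n + 1)) :
    (restrictSYT T).entry = restrict n T.entry := rfl
/-! ### restriction of minors -/

section phi
variable {n : ℕ} (T : SYT (n + 1))

lemma SYT.big_inv_aux {m : ℕ} {c : ℕ × ℕ} (hc : T.entry c = m) (h1 : 1 ≤ m) :
    BigInv n (Function.update T.entry c 0) c := by
  intro x hx
  have hxc : x ≠ c := by
    intro h; rw [h, Function.update_self] at hx; omega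
  rw [Function.update_of_ne hxc] at hx
  have hle := T.le_n x
  have hx1 : T.entry x = n + 1 := by omega
  have hne : T.entry x ≠ 0 := by omega
  have hr : T.entry (x.1, x.2 + 1) = 0 := by
    by_contra h
    have := T.row_lt x.1 x.2 h
    have := T.le_n (x.1, x.2 + 1)
    rw [show ((x.1, x.2) : ℕ × ℕ) = x from rfl, hx1] at *
    omega
  have hb : T.entry (x.1 + 1, x.2) = 0 := by
    by_contra h
    have := T.col_lt x.1 x.2 h
    have := T.le_n (x.1 + 1, x.2)
    rw [show ((x.1, x.2) : ℕ × ℕ) = x from rfl, hx1] at *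
    omega
  have hrc : (x.1, x.2 + 1) ≠ c := by
    intro h; rw [h, hc] at hr; omega
  have hbc : (x.1 + 1, x.2) ≠ c := by
    intro h; rw [h, hc] at hb; omega
  refine ⟨?_, ?_, hxc, hrc, hbc⟩
  · rw [Function.update_of_ne hrc]; exact hr
  · rw [Function.update_of_ne hbc]; exact hb

lemma phi_small {m : ℕ} (h1 : 1 ≤ m) (h2 : m ≤ n - 1) (hn : 2 ≤ n) :
    restrict (n - 1) (T.del m) = (restrictSYT T).del m := by
  obtain ⟨c, hc⟩ := T.exists_cell m h1 (by omega)
  have hinv : BigInv n (Function.update T.entry c 0) c :=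
    T.big_inv_aux hc h1
  have hole : (Function.update T.entry c 0) c = 0 := by simp
  have hcomm := jdt_restrict n (n + 1) (Function.update T.entry c 0) c hole hinv
  rw [restrict_update n T.entry c 0 (Nat.zero_le n)] at hcomm
  have hfuel : jdtAux (n + 1) (Function.update (restrict n T.entry) c 0) c =
      jdtAux n (Function.update (restrict n T.entry) c 0) c := by
    refine jdtAux_fuel n (n + 1) n _ c ?_ (by omega) (by omega)
    intro x hx
    rcases eq_or_ne x c with rfl | hxc
    · simp at hx
    · rw [Function.update_of_ne hxc] at hx
      exact (restrictSYT T).diag_bound x.1 x.2 hx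
  rw [hfuel] at hcomm
  -- name the slide results
  set D := jdtAux (n + 1) (Function.update T.entry c 0) c with hD
  set D' := jdtAux n (Function.update (restrict n T.entry) c 0) c with hD'
  have hrc : restrict n T.entry c = m := by
    rw [restrict_apply, hc, if_pos (by omega)]
  have hruniq : ∀ c', restrict n T.entry c' = m → c' = c := by
    intro c' h
    have h0 : restrict n T.entry c' ≠ 0 := by omega
    obtain ⟨hne, hle⟩ := restrict_ne_zero h0
    rw [restrict_apply, if_pos hle] at h
    exact T.cell_uniq (by omega) hc c' h
  have hDle : ∀ x, D x ≤ n + 1 := by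
    refine jdtAux_pred (· ≤ n + 1) (by omega) (n + 1) _ c ?_
    intro y
    rcases eq_or_ne y c with rfl | hy
    · simp
    · rw [Function.update_of_ne hy]; exact T.le_n y
  funext x
  rw [restrict_apply, SYT.del, delRaw_apply (n + 1) T.entry m c (by omega) hc
      (T.cell_uniq (by omega) hc) x]
  rw [SYT.del, restrictSYT_entry, delRaw_apply n (restrict n T.entry) m c (by omega) hrc hruniq x]
  rw [← hD, ← hD']
  have hD'x : D' x = restrict n D x := by rw [hcomm]
  rw [hD'x, restrict_apply]
  have hDxle := hDle x
  rcases Nat.lt_or_ge n (D x) with hbig | hsmall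
  · -- D x = n + 1
    rw [if_neg (show ¬ D x ≤ n by omega), if_neg (show ¬ m < 0 by omega),
      if_pos (show m < D x by omega), if_neg (show ¬ D x - 1 ≤ n - 1 by omega)]
  · rw [if_pos (show D x ≤ n from hsmall)]
    rcases Nat.lt_or_ge m (D x) with hlt | hge
    · rw [if_pos (show m < D x from hlt), if_pos (show D x - 1 ≤ n - 1 by omega)]
    · rw [if_neg (show ¬ m < D x by omega), if_pos (show D x ≤ n - 1 by omega)]

lemma phi_secondtop (hn : 2 ≤ n) :
    restrict (n - 1) (T.del n) = restrict (n - 1) T.entry := by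
  obtain ⟨c, hc⟩ := T.exists_cell n (by omega) (by omega)
  have hinv : BigInv (n - 1) (Function.update T.entry c 0) c := by
    intro x hx
    have hxc : x ≠ c := by
      intro h; rw [h, Function.update_self] at hx; omega
    rw [Function.update_of_ne hxc] at hx
    have hle := T.le_n x
    have hx1 : T.entry x = n + 1 := by
      rcases Nat.lt_or_ge (T.entry x) (n + 1) with h | h
      · exfalso
        -- value in (n-1, n]: must be n, but that's at c
        have : T.entry x = n := by omega
        exact hxc (T.cell_uniq (by omega) hc x this)
      · omega
    have hne : T.entry x ≠ 0 := by omega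
    have hr : T.entry (x.1, x.2 + 1) = 0 := by
      by_contra h
      have := T.row_lt x.1 x.2 h
      have := T.le_n (x.1, x.2 + 1)
      rw [show ((x.1, x.2) : ℕ × ℕ) = x from rfl, hx1] at *
      omega
    have hb : T.entry (x.1 + 1, x.2) = 0 := by
      by_contra h
      have := T.col_lt x.1 x.2 h
      have := T.le_n (x.1 + 1, x.2)
      rw [show ((x.1, x.2) : ℕ × ℕ) = x from rfl, hx1] at *
      omega
    have hrc : (x.1, x.2 + 1) ≠ c := by
      intro h; rw [h, hc] at hr; omega
    have hbc : (x.1 + 1, x.2) ≠ c := by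
      intro h; rw [h, hc] at hb; omega
    refine ⟨?_, ?_, hxc, hrc, hbc⟩
    · rw [Function.update_of_ne hrc]; exact hr
    · rw [Function.update_of_ne hbc]; exact hb
  have hole : (Function.update T.entry c 0) c = 0 := by simp
  have hcomm := jdt_restrict (n - 1) (n + 1) (Function.update T.entry c 0) c hole hinv
  rw [restrict_update (n - 1) T.entry c 0 (Nat.zero_le _)] at hcomm
  have hcfix : Function.update (restrict (n - 1) T.entry) c 0 = restrict (n - 1) T.entry := by
    funext y
    rcases eq_or_ne y c with rfl | hy
    · rw [Function.update_self, restrict_apply, hc, if_neg (by omega)]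
    · rw [Function.update_of_ne hy]
  rw [hcfix] at hcomm
  have hstop : jdtAux (n + 1) (restrict (n - 1) T.entry) c = restrict (n - 1) T.entry := by
    refine jdtAux_stop _ _ _ ?_ ?_
    · rw [restrict_apply]
      split
      · rename_i h
        by_cases h0 : T.entry (c.1, c.2 + 1) = 0
        · exact h0
        · exfalso
          have := T.row_lt c.1 c.2 h0
          rw [show ((c.1, c.2) : ℕ × ℕ) = c from rfl, hc] at this
          omega
      · rfl
    · rw [restrict_apply]
      split
      · rename_i h
        by_cases h0 : T.entry (c.1 + 1, c.2) = 0
        · exact h0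
        · exfalso
          have := T.col_lt c.1 c.2 h0
          rw [show ((c.1, c.2) : ℕ × ℕ) = c from rfl, hc] at this
          omega
      · rfl
  rw [hstop] at hcomm
  -- now the pointwise finish
  set D := jdtAux (n + 1) (Function.update T.entry c 0) c with hD
  have hDprop : ∀ x, D x ≠ n ∧ D x ≤ n + 1 := by
    refine jdtAux_pred (fun v => v ≠ n ∧ v ≤ n + 1) ⟨by omega, by omega⟩ (n + 1) _ c ?_
    intro y
    rcases eq_or_ne y c with rfl | hy
    · rw [Function.update_self]; exact ⟨by omega, by omega⟩
    · rw [Function.update_of_ne hy]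
      exact ⟨fun h => hy (T.cell_uniq (by omega) hc y h), T.le_n y⟩
  funext x
  have hx := hDprop x
  have hcx : restrict (n - 1) D x = restrict (n - 1) T.entry x := by rw [hcomm]
  rw [restrict_apply, SYT.del, delRaw_apply (n + 1) T.entry n c (by omega) hc
      (T.cell_uniq (by omega) hc) x, ← hD]
  rw [restrict_apply] at hcx
  rcases Nat.lt_or_ge (D x) n with hsm | hbig
  · rw [if_pos (show D x ≤ n - 1 by omega)] at hcx
    rw [if_neg (show ¬ n < D x by omega), if_pos (show D x ≤ n - 1 by omega)]
    exact hcx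
  · have hDx : D x = n + 1 := by omega
    rw [if_neg (show ¬ D x ≤ n - 1 by omega)] at hcx
    rw [if_pos (show n < D x by omega), if_neg (show ¬ D x - 1 ≤ n - 1 by omega)]
    exact hcx

lemma phi_top (hn : 2 ≤ n) :
    restrict (n - 1) (T.del (n + 1)) = restrict (n - 1) T.entry := by
  rw [T.del_top (by omega)]
  have : n + 1 - 1 = n := by omega
  rw [this, restrict_restrict (n - 1) n (by omega)]

lemma restrictSYT_del_top (hn : 1 ≤ n) :
    (restrictSYT T).del n = restrict (n - 1) T.entry := by
  rw [(restrictSYT T).del_top hn, restrictSYT_entry, restrict_restrict (n - 1) n (by omega)]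

end phi
/-! ### the Ψ multisets and the descent identity -/

noncomputable def Psi {n : ℕ} (k : ℕ) (T : SYT n) : Multiset (ℕ × ℕ → ℕ) :=
  minors1M T + Multiset.replicate k (T.del n)

lemma icc_split (n : ℕ) (hn : 3 ≤ n) :
    (Finset.Icc 1 (n + 1)).val = (n + 1) ::ₘ n ::ₘ (Finset.Icc 1 (n - 1)).val := by
  have h1 : Finset.Icc 1 (n + 1) = insert (n + 1) (insert n (Finset.Icc 1 (n - 1))) := by
    ext a
    simp only [Finset.mem_Icc, Finset.mem_insert]
    omega
  rw [h1, Finset.insert_val_of_notMem (by simp [Finset.mem_Icc]),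
    Finset.insert_val_of_notMem (by simp [Finset.mem_Icc]; omega)]

lemma icc_split' (n : ℕ) (hn : 3 ≤ n) :
    (Finset.Icc 1 n).val = n ::ₘ (Finset.Icc 1 (n - 1)).val := by
  have h1 : Finset.Icc 1 n = insert n (Finset.Icc 1 (n - 1)) := by
    ext a
    simp only [Finset.mem_Icc, Finset.mem_insert]
    omega
  rw [h1, Finset.insert_val_of_notMem (by simp [Finset.mem_Icc]; omega)]

lemma psi_map {n : ℕ} (hn : 3 ≤ n) (k : ℕ) (T : SYT (n + 1)) :
    (Psi k T).map (restrict (n - 1)) = Psi (k + 1) (restrictSYT T) := by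
  have h2n : 2 ≤ n := by omega
  rw [Psi, Psi, minors1M, minors1M, icc_split n hn, icc_split' n hn]
  rw [Multiset.map_cons, Multiset.map_cons, Multiset.map_cons, Multiset.map_add,
    Multiset.map_cons, Multiset.map_cons, Multiset.map_replicate]
  rw [phi_top T h2n, phi_secondtop T h2n, ← restrictSYT_del_top T (by omega)]
  have hmapcongr : Multiset.map (restrict (n - 1) ∘ T.del) (Finset.Icc 1 (n - 1)).val =
      Multiset.map (restrictSYT T).del (Finset.Icc 1 (n - 1)).val := by
    refine Multiset.map_congr rfl ?_
    intro m hm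
    have hm' : 1 ≤ m ∧ m ≤ n - 1 := Finset.mem_Icc.mp (Finset.mem_def.mpr hm)
    simp only [Function.comp_apply]
    exact phi_small T hm'.1 hm'.2 h2n
  rw [Multiset.map_map, hmapcongr]
  rw [Multiset.replicate_succ]
  simp only [← Multiset.singleton_add]
  abel
/-! ### membership in Ψ, corners, and the main induction -/

lemma psi_mem_del {n k m : ℕ} (T : SYT n) (h1 : 1 ≤ m) (h2 : m ≤ n) : T.del m ∈ Psi k T :=
  Multiset.mem_add.mpr (Or.inl (Multiset.mem_map.mpr
    ⟨m, Finset.mem_def.mp (Finset.mem_Icc.mpr ⟨h1, h2⟩), rfl⟩))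

lemma psi_mem_extract {n k : ℕ} (T : SYT n) (hn : 1 ≤ n) {g : ℕ × ℕ → ℕ}
    (hg : g ∈ Psi k T) : ∃ m, 1 ≤ m ∧ m ≤ n ∧ g = T.del m := by
  rcases Multiset.mem_add.mp hg with h | h
  · obtain ⟨m, hm, hq⟩ := Multiset.mem_map.mp h
    have := Finset.mem_Icc.mp (Finset.mem_def.mpr hm)
    exact ⟨m, this.1, this.2, hq.symm⟩
  · exact ⟨n, hn, le_rfl, Multiset.eq_of_mem_replicate h⟩

lemma SYT.exists_corner {n : ℕ} (T : SYT n) : ∀ (d : ℕ) (x : ℕ × ℕ), n ≤ x.1 + x.2 + d →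
    T.entry x ≠ 0 →
    ∃ y : ℕ × ℕ, x.1 ≤ y.1 ∧ x.2 ≤ y.2 ∧ T.entry y ≠ 0 ∧
      T.entry (y.1, y.2 + 1) = 0 ∧ T.entry (y.1 + 1, y.2) = 0 := by
  intro d
  induction d with
  | zero =>
    intro x hxd hx
    have := T.diag_bound x.1 x.2 hx
    omega
  | succ d ih =>
    intro x hxd hx
    by_cases hr : T.entry (x.1, x.2 + 1) = 0
    · by_cases hb : T.entry (x.1 + 1, x.2) = 0
      · exact ⟨x, le_rfl, le_rfl, hx, hr, hb⟩
      · obtain ⟨y, h1, h2, h3, h4, h5⟩ := ih (x.1 + 1, x.2) (by simp; omega) hb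
        simp only at h1 h2
        exact ⟨y, by omega, by omega, h3, h4, h5⟩
    · obtain ⟨y, h1, h2, h3, h4, h5⟩ := ih (x.1, x.2 + 1) (by simp; omega) hr
      simp only at h1 h2
      exact ⟨y, by omega, by omega, h3, h4, h5⟩

section claimA
variable {n k : ℕ}

/-- if `S` has an outer corner other than the cell of its top entry, then the top cells of
`S` and `T` agree. -/
lemma top_cell_eq (S T : SYT (n + 1)) (h : Psi k S = Psi k T)
    (hres : restrict n S.entry = restrict n T.entry) (u v : ℕ × ℕ)
    (hu : S.entry u = n + 1) (hv : T.entry v = n + 1)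
    (hc : ∃ c, S.entry c ≠ 0 ∧ S.entry (c.1, c.2 + 1) = 0 ∧ S.entry (c.1 + 1, c.2) = 0 ∧ c ≠ u) :
    u = v := by
  obtain ⟨c, hc0, hcr, hcb, hcu⟩ := hc
  have hm1 : 1 ≤ S.entry c := by omega
  have hm2 : S.entry c ≤ n + 1 := S.le_n c
  have hgu : S.del (S.entry c) u ≠ 0 := (S.del_corner_supp hc0 hcr hcb u).mpr ⟨by omega, fun hh => hcu hh.symm⟩
  have hmem : S.del (S.entry c) ∈ Psi k T := h ▸ psi_mem_del (k := k) S hm1 hm2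
  obtain ⟨m', hm'1, hm'2, heq⟩ := psi_mem_extract T (by omega) hmem
  have hTu : T.entry u ≠ 0 := T.del_supp hm'1 hm'2 u (by rw [← heq]; exact hgu)
  rcases eq_or_ne (T.entry u) (n + 1) with h1 | h1
  · exact T.cell_uniq (m := n + 1) (by omega) hv u h1
  · exfalso
    have hTle : T.entry u ≤ n := by have := T.le_n u; omega
    have hcon : restrict n T.entry u ≠ 0 := by rw [restrict_apply, if_pos hTle]; exact hTu
    rw [← hres, restrict_apply, hu, if_neg (by omega)] at hcon
    exact hcon rfl

lemma box_of_unique_corner (S : SYT (n + 1)) (u : ℕ × ℕ) (hu : S.entry u = n + 1)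
    (hall : ¬ ∃ c, S.entry c ≠ 0 ∧ S.entry (c.1, c.2 + 1) = 0 ∧ S.entry (c.1 + 1, c.2) = 0 ∧ c ≠ u) :
    ∀ x : ℕ × ℕ, S.entry x ≠ 0 ↔ (x.1 ≤ u.1 ∧ x.2 ≤ u.2) := by
  push_neg at hall
  intro x
  constructor
  · intro hx
    obtain ⟨y, h1, h2, h3, h4, h5⟩ := S.exists_corner (n + 1) x (by omega) hx
    have hyu : y = u := hall y h3 h4 h5
    rw [hyu] at h1 h2
    exact ⟨h1, h2⟩
  · intro ⟨h1, h2⟩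
    exact S.diagram u.1 u.2 x.1 x.2 h1 h2 (by rw [show ((u.1, u.2) : ℕ × ℕ) = u from rfl, hu]; omega)

lemma sig_transfer (S T : SYT (n + 1)) (u : ℕ × ℕ) (hu : S.entry u = n + 1)
    (hres : restrict n S.entry = restrict n T.entry) (x : ℕ × ℕ) (hxu : x ≠ u)
    (hx : S.entry x ≠ 0) : T.entry x ≠ 0 := by
  have hxle : S.entry x ≤ n := by
    have := S.le_n x
    have : S.entry x ≠ n + 1 := fun h => hxu (S.cell_uniq (by omega) hu x h)
    omega
  have h1 : restrict n S.entry x ≠ 0 := by rw [restrict_apply, if_pos hxle]; exact hx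
  rw [hres, restrict_apply] at h1
  split at h1
  · exact h1
  · exact absurd rfl h1

lemma not_box_le (S T : SYT (n + 1)) (u v : ℕ × ℕ) (hu : S.entry u = n + 1)
    (hv : T.entry v = n + 1) (hres : restrict n S.entry = restrict n T.entry)
    (hne : u ≠ v) (hTbox : ∀ x : ℕ × ℕ, T.entry x ≠ 0 ↔ (x.1 ≤ v.1 ∧ x.2 ≤ v.2)) :
    ¬ (u.1 ≤ v.1 ∧ u.2 ≤ v.2) := by
  intro ⟨h1, h2⟩
  have hTu : T.entry u ≠ 0 := (hTbox u).mpr ⟨h1, h2⟩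
  have hTule : T.entry u ≤ n := by
    have := T.le_n u
    have : T.entry u ≠ n + 1 := fun h => hne (T.cell_uniq (by omega) hv u h)
    omega
  have hcon : restrict n T.entry u ≠ 0 := by rw [restrict_apply, if_pos hTule]; exact hTu
  rw [← hres, restrict_apply, hu, if_neg (by omega)] at hcon
  exact hcon rfl

lemma rect_contra (hn : 2 ≤ n) (S T : SYT (n + 1)) (u v : ℕ × ℕ)
    (hSbox : ∀ x : ℕ × ℕ, S.entry x ≠ 0 ↔ (x.1 ≤ u.1 ∧ x.2 ≤ u.2))
    (hTbox : ∀ x : ℕ × ℕ, T.entry x ≠ 0 ↔ (x.1 ≤ v.1 ∧ x.2 ≤ v.2))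
    (hu : S.entry u = n + 1) (hv : T.entry v = n + 1)
    (hres : restrict n S.entry = restrict n T.entry)
    (h1 : v.1 < u.1) (h2 : u.2 < v.2) : False := by
  have hu2 : u.2 = 0 := by
    by_contra h2pos
    have hx : S.entry (u.1, 0) ≠ 0 := (hSbox (u.1, 0)).mpr (by simp)
    have hxu : ((u.1, 0) : ℕ × ℕ) ≠ u := by
      intro hh; have := congrArg Prod.snd hh; simp at this; omega
    have hT := sig_transfer S T u hu hres _ hxu hx
    have := ((hTbox _).mp hT).1
    simp only at this
    omega
  have hv1 : v.1 = 0 := by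
    by_contra h1pos
    have hx : T.entry (0, v.2) ≠ 0 := (hTbox (0, v.2)).mpr (by simp)
    have hxv : ((0, v.2) : ℕ × ℕ) ≠ v := by
      intro hh; have := congrArg Prod.fst hh; simp at this; omega
    have hS := sig_transfer T S v hv hres.symm _ hxv hx
    have := ((hSbox _).mp hS).2
    simp only at this
    omega
  -- cells of 1 and 2 both forced to (0,0)
  obtain ⟨p, hp⟩ := S.exists_cell 1 le_rfl (by omega)
  obtain ⟨q, hq⟩ := S.exists_cell 2 (by omega) (by omega)
  have hforce : ∀ w : ℕ × ℕ, S.entry w ≠ 0 → S.entry w ≤ n → w = (0, 0) := by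
    intro w hw hwle
    have hwu : w ≠ u := by intro hh; rw [hh, hu] at hwle; omega
    have hbu := (hSbox w).mp hw
    have hT := sig_transfer S T u hu hres w hwu hw
    have hbv := (hTbox w).mp hT
    have : w.1 = 0 ∧ w.2 = 0 := by omega
    exact Prod.ext this.1 this.2
  have hp00 : p = (0, 0) := hforce p (by omega) (by omega)
  have hq00 : q = (0, 0) := hforce q (by omega) (by omega)
  rw [hp00] at hp; rw [hq00] at hq
  omega

end claimA

/-! ### base case n = 3 : explicit tableaux and their minors -/

def F3 (c2 c3 : ℕ × ℕ) : ℕ × ℕ → ℕ :=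
  fun x => if x = (0, 0) then 1 else if x = c2 then 2 else if x = c3 then 3 else 0

def row2 : ℕ × ℕ → ℕ := fun x => if x = (0, 0) then 1 else if x = (0, 1) then 2 else 0
def col2 : ℕ × ℕ → ℕ := fun x => if x = (0, 0) then 1 else if x = (1, 0) then 2 else 0

/-- entries `2,3` at cells `p,q` -/
def E2 (p q : ℕ × ℕ) : ℕ × ℕ → ℕ := fun x => if x = p then 2 else if x = q then 3 else 0
/-- entries `1,3` at cells `p,q` -/
def E13 (p q : ℕ × ℕ) : ℕ × ℕ → ℕ := fun x => if x = p then 1 else if x = q then 3 else 0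

lemma row2_ne_col2 : row2 ≠ col2 := by
  intro h
  have := congrFun h (0, 1)
  simp [row2, col2, Prod.ext_iff] at this

section canon
variable {p q c c2 c3 : ℕ × ℕ}

lemma upd_E2 (hcp : c ≠ p) (hcq : c ≠ q) (hqp : q ≠ p) :
    Function.update (Function.update (E2 p q) c 2) p 0 = E2 c q := by
  funext x
  simp only [Function.update_apply, E2]
  split_ifs <;> simp_all

lemma upd_E2' (hcp : c ≠ p) (hcq : c ≠ q) (hpq : p ≠ q) :
    Function.update (Function.update (E2 p q) c 3) q 0 = E2 p c := by
  funext x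
  simp only [Function.update_apply, E2]
  split_ifs <;> simp_all

lemma upd_E13' (hcp : c ≠ p) (hcq : c ≠ q) (hpq : p ≠ q) :
    Function.update (Function.update (E13 p q) c 3) q 0 = E13 p c := by
  funext x
  simp only [Function.update_apply, E13]
  split_ifs <;> simp_all

lemma upd_F3_1 (h2 : c2 ≠ (0, 0)) (h3 : c3 ≠ (0, 0)) (h23 : c2 ≠ c3) :
    Function.update (F3 c2 c3) (0, 0) 0 = E2 c2 c3 := by
  funext x
  simp only [Function.update_apply, F3, E2]
  split_ifs <;> simp_all

lemma upd_F3_2 (h2 : c2 ≠ (0, 0)) (h3 : c3 ≠ (0, 0)) (h23 : c2 ≠ c3) :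
    Function.update (F3 c2 c3) c2 0 = E13 (0, 0) c3 := by
  funext x
  simp only [Function.update_apply, F3, E13]
  split_ifs <;> simp_all

lemma upd_F3_3 (h2 : c2 ≠ (0, 0)) (h3 : c3 ≠ (0, 0)) (h23 : c2 ≠ c3) :
    Function.update (F3 c2 c3) c3 0 = fun x => if x = (0, 0) then 1 else if x = c2 then 2 else 0 := by
  funext x
  simp only [Function.update_apply, F3]
  split_ifs <;> simp_all

lemma ren1_E2 :
    (fun x => if 1 < E2 p q x then E2 p q x - 1 else E2 p q x) =
      fun x => if x = p then 1 else if x = q then 2 else 0 := by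
  funext x
  simp only [E2]
  split_ifs <;> omega

lemma ren2_E13 :
    (fun x => if 2 < E13 p q x then E13 p q x - 1 else E13 p q x) =
      fun x => if x = p then 1 else if x = q then 2 else 0 := by
  funext x
  simp only [E13]
  split_ifs <;> omega

lemma ren3_id (f : ℕ × ℕ → ℕ) (hf : ∀ x, f x ≤ 2) :
    (fun x => if 3 < f x then f x - 1 else f x) = f := by
  funext x
  have := hf x
  rw [if_neg (by omega)]

lemma F3_uniq1 (h2 : c2 ≠ (0, 0)) (h3 : c3 ≠ (0, 0)) :
    ∀ c', F3 c2 c3 c' = 1 → c' = (0, 0) := by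
  intro c' h'
  simp only [F3] at h'
  split_ifs at h' <;> simp_all

lemma F3_uniq2 (h2 : c2 ≠ (0, 0)) (h3 : c3 ≠ (0, 0)) :
    ∀ c', F3 c2 c3 c' = 2 → c' = c2 := by
  intro c' h'
  simp only [F3] at h'
  split_ifs at h' <;> simp_all

lemma F3_uniq3 (h2 : c2 ≠ (0, 0)) (h3 : c3 ≠ (0, 0)) :
    ∀ c', F3 c2 c3 c' = 3 → c' = c3 := by
  intro c' h'
  simp only [F3] at h'
  split_ifs at h' <;> simp_all

end canon

section dels

lemma del_row3_1 : delRaw 3 (F3 (0, 1) (0, 2)) 1 = row2 := by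
  rw [delRaw_eq 3 _ 1 (0, 0) (by norm_num) (by norm_num [F3])
      (F3_uniq1 (by decide) (by decide))]
  rw [upd_F3_1 (by decide) (by decide) (by decide)]
  rw [jdtAux_succ]
  norm_num [E2, Prod.ext_iff]
  rw [upd_E2 (by decide) (by decide) (by decide)]
  rw [jdtAux_succ]
  norm_num [E2, Prod.ext_iff]
  rw [upd_E2' (by decide) (by decide) (by decide)]
  rw [jdtAux_stop 1 _ _ (by norm_num [E2, Prod.ext_iff]) (by norm_num [E2, Prod.ext_iff])]
  rw [ren1_E2]
  rfl

lemma del_row3_2 : delRaw 3 (F3 (0, 1) (0, 2)) 2 = row2 := by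
  rw [delRaw_eq 3 _ 2 (0, 1) (by norm_num) (by norm_num [F3, Prod.ext_iff])
      (F3_uniq2 (by decide) (by decide))]
  rw [upd_F3_2 (by decide) (by decide) (by decide)]
  rw [jdtAux_succ]
  norm_num [E13, Prod.ext_iff]
  rw [upd_E13' (by decide) (by decide) (by decide)]
  rw [jdtAux_stop 2 _ _ (by norm_num [E13, Prod.ext_iff]) (by norm_num [E13, Prod.ext_iff])]
  rw [ren2_E13]
  rfl

lemma del_row3_3 : delRaw 3 (F3 (0, 1) (0, 2)) 3 = row2 := by
  rw [delRaw_eq 3 _ 3 (0, 2) (by norm_num) (by norm_num [F3, Prod.ext_iff])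
      (F3_uniq3 (by decide) (by decide))]
  rw [upd_F3_3 (by decide) (by decide) (by decide)]
  rw [jdtAux_stop 3 _ _ (by norm_num [Prod.ext_iff]) (by norm_num [Prod.ext_iff])]
  funext x
  simp only [row2]
  split_ifs <;> omega

lemma del_col3_1 : delRaw 3 (F3 (1, 0) (2, 0)) 1 = col2 := by
  rw [delRaw_eq 3 _ 1 (0, 0) (by norm_num) (by norm_num [F3, Prod.ext_iff])
      (F3_uniq1 (by decide) (by decide))]
  rw [upd_F3_1 (by decide) (by decide) (by decide)]
  rw [jdtAux_succ]
  norm_num [E2, Prod.ext_iff]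
  rw [upd_E2 (by decide) (by decide) (by decide)]
  rw [jdtAux_succ]
  norm_num [E2, Prod.ext_iff]
  rw [upd_E2' (by decide) (by decide) (by decide)]
  rw [jdtAux_stop 1 _ _ (by norm_num [E2, Prod.ext_iff]) (by norm_num [E2, Prod.ext_iff])]
  rw [ren1_E2]
  rfl

lemma del_col3_2 : delRaw 3 (F3 (1, 0) (2, 0)) 2 = col2 := by
  rw [delRaw_eq 3 _ 2 (1, 0) (by norm_num) (by norm_num [F3, Prod.ext_iff])
      (F3_uniq2 (by decide) (by decide))]
  rw [upd_F3_2 (by decide) (by decide) (by decide)]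
  rw [jdtAux_succ]
  norm_num [E13, Prod.ext_iff]
  rw [upd_E13' (by decide) (by decide) (by decide)]
  rw [jdtAux_stop 2 _ _ (by norm_num [E13, Prod.ext_iff]) (by norm_num [E13, Prod.ext_iff])]
  rw [ren2_E13]
  rfl

lemma del_col3_3 : delRaw 3 (F3 (1, 0) (2, 0)) 3 = col2 := by
  rw [delRaw_eq 3 _ 3 (2, 0) (by norm_num) (by norm_num [F3, Prod.ext_iff])
      (F3_uniq3 (by decide) (by decide))]
  rw [upd_F3_3 (by decide) (by decide) (by decide)]
  rw [jdtAux_stop 3 _ _ (by norm_num [Prod.ext_iff]) (by norm_num [Prod.ext_iff])]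
  funext x
  simp only [col2]
  split_ifs <;> omega

lemma del_A_1 : delRaw 3 (F3 (0, 1) (1, 0)) 1 = col2 := by
  rw [delRaw_eq 3 _ 1 (0, 0) (by norm_num) (by norm_num [F3, Prod.ext_iff])
      (F3_uniq1 (by decide) (by decide))]
  rw [upd_F3_1 (by decide) (by decide) (by decide)]
  rw [jdtAux_succ]
  norm_num [E2, Prod.ext_iff]
  rw [upd_E2 (by decide) (by decide) (by decide)]
  rw [jdtAux_stop 2 _ _ (by norm_num [E2, Prod.ext_iff]) (by norm_num [E2, Prod.ext_iff])]
  rw [ren1_E2]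
  rfl

lemma del_A_2 : delRaw 3 (F3 (0, 1) (1, 0)) 2 = col2 := by
  rw [delRaw_eq 3 _ 2 (0, 1) (by norm_num) (by norm_num [F3, Prod.ext_iff])
      (F3_uniq2 (by decide) (by decide))]
  rw [upd_F3_2 (by decide) (by decide) (by decide)]
  rw [jdtAux_stop 3 _ _ (by norm_num [E13, Prod.ext_iff]) (by norm_num [E13, Prod.ext_iff])]
  rw [ren2_E13]
  rfl

lemma del_A_3 : delRaw 3 (F3 (0, 1) (1, 0)) 3 = row2 := by
  rw [delRaw_eq 3 _ 3 (1, 0) (by norm_num) (by norm_num [F3, Prod.ext_iff])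
      (F3_uniq3 (by decide) (by decide))]
  rw [upd_F3_3 (by decide) (by decide) (by decide)]
  rw [jdtAux_stop 3 _ _ (by norm_num [Prod.ext_iff]) (by norm_num [Prod.ext_iff])]
  funext x
  simp only [row2]
  split_ifs <;> omega

lemma del_B_1 : delRaw 3 (F3 (1, 0) (0, 1)) 1 = row2 := by
  rw [delRaw_eq 3 _ 1 (0, 0) (by norm_num) (by norm_num [F3, Prod.ext_iff])
      (F3_uniq1 (by decide) (by decide))]
  rw [upd_F3_1 (by decide) (by decide) (by decide)]
  rw [jdtAux_succ]
  norm_num [E2, Prod.ext_iff]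
  rw [upd_E2 (by decide) (by decide) (by decide)]
  rw [jdtAux_stop 2 _ _ (by norm_num [E2, Prod.ext_iff]) (by norm_num [E2, Prod.ext_iff])]
  rw [ren1_E2]
  rfl

lemma del_B_2 : delRaw 3 (F3 (1, 0) (0, 1)) 2 = row2 := by
  rw [delRaw_eq 3 _ 2 (1, 0) (by norm_num) (by norm_num [F3, Prod.ext_iff])
      (F3_uniq2 (by decide) (by decide))]
  rw [upd_F3_2 (by decide) (by decide) (by decide)]
  rw [jdtAux_stop 3 _ _ (by norm_num [E13, Prod.ext_iff]) (by norm_num [E13, Prod.ext_iff])]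
  rw [ren2_E13]
  rfl

lemma del_B_3 : delRaw 3 (F3 (1, 0) (0, 1)) 3 = col2 := by
  rw [delRaw_eq 3 _ 3 (0, 1) (by norm_num) (by norm_num [F3, Prod.ext_iff])
      (F3_uniq3 (by decide) (by decide))]
  rw [upd_F3_3 (by decide) (by decide) (by decide)]
  rw [jdtAux_stop 3 _ _ (by norm_num [Prod.ext_iff]) (by norm_num [Prod.ext_iff])]
  funext x
  simp only [col2]
  split_ifs <;> omega

end dels
/-! ### enumeration of standard Young tableaux with 3 cells, and the base case -/

lemma left_cell_one {n : ℕ} (S : SYT n) {i j : ℕ} (h : S.entry (i, j + 1) = 2) :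
    S.entry (i, j) = 1 := by
  have hne : S.entry (i, j + 1) ≠ 0 := by omega
  have hlt := S.row_lt i j hne
  have h0 : S.entry (i, j) ≠ 0 := S.diagram i (j + 1) i j le_rfl (by omega) hne
  omega

lemma up_cell_one {n : ℕ} (S : SYT n) {i j : ℕ} (h : S.entry (i + 1, j) = 2) :
    S.entry (i, j) = 1 := by
  have hne : S.entry (i + 1, j) ≠ 0 := by omega
  have hlt := S.col_lt i j hne
  have h0 : S.entry (i, j) ≠ 0 := S.diagram (i + 1) j i j (by omega) le_rfl hne
  omega

lemma left_cell_sm3 {n : ℕ} (S : SYT n) {i j : ℕ} (h : S.entry (i, j + 1) = 3) :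
    S.entry (i, j) = 1 ∨ S.entry (i, j) = 2 := by
  have hne : S.entry (i, j + 1) ≠ 0 := by omega
  have hlt := S.row_lt i j hne
  have h0 : S.entry (i, j) ≠ 0 := S.diagram i (j + 1) i j le_rfl (by omega) hne
  omega

lemma up_cell_sm3 {n : ℕ} (S : SYT n) {i j : ℕ} (h : S.entry (i + 1, j) = 3) :
    S.entry (i, j) = 1 ∨ S.entry (i, j) = 2 := by
  have hne : S.entry (i + 1, j) ≠ 0 := by omega
  have hlt := S.col_lt i j hne
  have h0 : S.entry (i, j) ≠ 0 := S.diagram (i + 1) j i j (by omega) le_rfl hne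
  omega

lemma enum3 (S : SYT 3) :
    S.entry = F3 (0, 1) (0, 2) ∨ S.entry = F3 (0, 1) (1, 0) ∨
    S.entry = F3 (1, 0) (0, 1) ∨ S.entry = F3 (1, 0) (2, 0) := by
  have h1 : S.entry (0, 0) = 1 := S.entry_one (by omega)
  obtain ⟨⟨i2, j2⟩, hc2⟩ := S.exists_cell 2 (by omega) (by omega)
  obtain ⟨⟨i3, j3⟩, hc3⟩ := S.exists_cell 3 (by omega) (by omega)
  have h20 : ((i2, j2) : ℕ × ℕ) ≠ (0, 0) := by intro hh; rw [hh, h1] at hc2; omega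
  have h30 : ((i3, j3) : ℕ × ℕ) ≠ (0, 0) := by intro hh; rw [hh, h1] at hc3; omega
  have h23 : ((i2, j2) : ℕ × ℕ) ≠ (i3, j3) := by intro hh; rw [hh, hc3] at hc2; omega
  have hfun : S.entry = F3 (i2, j2) (i3, j3) := by
    funext x
    by_cases h0 : x = (0, 0)
    · rw [h0, h1, F3]; simp
    · by_cases hx2 : x = (i2, j2)
      · rw [hx2, hc2, F3, if_neg h20, if_pos rfl]
      · by_cases hx3 : x = (i3, j3)
        · rw [hx3, hc3, F3, if_neg h30, if_neg (Ne.symm h23), if_pos rfl]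
        · have hx0 : S.entry x = 0 := by
            by_contra hne
            have hle := S.le_n x
            have hv : S.entry x = 1 ∨ S.entry x = 2 ∨ S.entry x = 3 := by omega
            rcases hv with hv | hv | hv
            · exact h0 (S.cell_unique (by omega) hv h1)
            · exact hx2 (S.cell_unique (by omega) hv hc2)
            · exact hx3 (S.cell_unique (by omega) hv hc3)
          rw [hx0, F3, if_neg h0, if_neg hx2, if_neg hx3]
  have hb2 : i2 + j2 + 1 ≤ 3 := S.diag_bound i2 j2 (by rw [hc2]; omega)
  have hb3 : i3 + j3 + 1 ≤ 3 := S.diag_bound i3 j3 (by rw [hc3]; omega)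
  have hi2 : i2 ≤ 2 := by omega
  have hj2 : j2 ≤ 2 := by omega
  have hi3 : i3 ≤ 2 := by omega
  have hj3 : j3 ≤ 2 := by omega
  have hcell2 : (i2 = 0 ∧ j2 = 1) ∨ (i2 = 1 ∧ j2 = 0) := by
    interval_cases i2 <;> interval_cases j2 <;> try omega
    · exact absurd (S.cell_unique (by omega) (left_cell_one S hc2) h1) (by decide)
    · exact absurd (S.cell_unique (by omega) (left_cell_one S hc2) h1) (by decide)
    · exact absurd (S.cell_unique (by omega) (up_cell_one S hc2) h1) (by decide)
  rcases hcell2 with ⟨hi, hj⟩ | ⟨hi, hj⟩ <;> subst hi <;> subst hj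
  · -- c2 = (0,1)
    have hcell3 : (i3 = 0 ∧ j3 = 2) ∨ (i3 = 1 ∧ j3 = 0) := by
      interval_cases i3 <;> interval_cases j3 <;> try omega
      · rcases left_cell_sm3 S hc3 with hv | hv
        · exact absurd (S.cell_unique (by omega) hv h1) (by decide)
        · exact absurd (S.cell_unique (by omega) hv hc2) (by decide)
      · rcases up_cell_sm3 S hc3 with hv | hv
        · exact absurd (S.cell_unique (by omega) hv h1) (by decide)
        · exact absurd (S.cell_unique (by omega) hv hc2) (by decide)
    rcases hcell3 with ⟨hi, hj⟩ | ⟨hi, hj⟩ <;> subst hi <;> subst hj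
    · exact Or.inl hfun
    · exact Or.inr (Or.inl hfun)
  · -- c2 = (1,0)
    have hcell3 : (i3 = 0 ∧ j3 = 1) ∨ (i3 = 2 ∧ j3 = 0) := by
      interval_cases i3 <;> interval_cases j3 <;> try omega
      · rcases left_cell_sm3 S hc3 with hv | hv
        · exact absurd (S.cell_unique (by omega) hv h1) (by decide)
        · exact absurd (S.cell_unique (by omega) hv hc2) (by decide)
      · rcases up_cell_sm3 S hc3 with hv | hv
        · exact absurd (S.cell_unique (by omega) hv h1) (by decide)
        · exact absurd (S.cell_unique (by omega) hv hc2) (by decide)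
    rcases hcell3 with ⟨hi, hj⟩ | ⟨hi, hj⟩ <;> subst hi <;> subst hj
    · exact Or.inr (Or.inr (Or.inl hfun))
    · exact Or.inr (Or.inr (Or.inr hfun))

lemma base3 (k : ℕ) (hk : k ≠ 1) (S T : SYT 3) (h : Psi k S = Psi k T) : S = T := by
  have hrc := row2_ne_col2
  have hcr := Ne.symm row2_ne_col2
  have hicc : (Finset.Icc 1 3).val = (1 ::ₘ 2 ::ₘ 3 ::ₘ 0) := by decide
  have hpsi : ∀ U : SYT 3, Psi k U =
      U.del 1 ::ₘ U.del 2 ::ₘ U.del 3 ::ₘ Multiset.replicate k (U.del 3) := by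
    intro U
    rw [Psi, minors1M, hicc]
    simp only [Multiset.map_cons, Multiset.map_zero, Multiset.cons_add, zero_add]
  rw [hpsi S, hpsi T] at h
  rcases enum3 S with hS | hS | hS | hS <;> rcases enum3 T with hT | hT | hT | hT <;>
    first
      | (exact SYT.ext_entry (hS.trans hT.symm))
      | (exfalso
         simp only [SYT.del, hS, hT, del_row3_1, del_row3_2, del_row3_3, del_col3_1,
           del_col3_2, del_col3_3, del_A_1, del_A_2, del_A_3, del_B_1, del_B_2, del_B_3] at h
         have h1 := congrArg (Multiset.count row2) h
         have h2 := congrArg (Multiset.count col2) h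
         simp [Multiset.count_cons, Multiset.count_replicate, hrc, hcr] at h1 h2
         try omega)
lemma key : ∀ n : ℕ, 3 ≤ n → ∀ k : ℕ, (n = 3 → k ≠ 1) → (n = 4 → 1 ≤ k) →
    ∀ S T : SYT n, Psi k S = Psi k T → S = T := by
  intro n hn
  induction n, hn using Nat.le_induction with
  | base =>
    intro k hk3 _ S T h
    exact base3 k (hk3 rfl) S T h
  | succ n hn ih =>
    intro k hk3 hk4 S T h
    have hmap := congrArg (Multiset.map (restrict (n - 1))) h
    rw [psi_map hn k S, psi_map hn k T] at hmap
    have hR : restrictSYT S = restrictSYT T := by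
      refine ih (k + 1) (fun h3 => ?_) (fun _ => by omega) _ _ hmap
      have := hk4 (by omega); omega
    have hres : restrict n S.entry = restrict n T.entry := by
      have := congrArg SYT.entry hR
      rwa [restrictSYT_entry, restrictSYT_entry] at this
    obtain ⟨u, hu⟩ := S.exists_cell (n + 1) (by omega) le_rfl
    obtain ⟨v, hv⟩ := T.exists_cell (n + 1) (by omega) le_rfl
    have huv : u = v := by
      by_cases hcS : ∃ c, S.entry c ≠ 0 ∧ S.entry (c.1, c.2 + 1) = 0 ∧
          S.entry (c.1 + 1, c.2) = 0 ∧ c ≠ u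
      · exact top_cell_eq S T h hres u v hu hv hcS
      · by_cases hcT : ∃ c, T.entry c ≠ 0 ∧ T.entry (c.1, c.2 + 1) = 0 ∧
            T.entry (c.1 + 1, c.2) = 0 ∧ c ≠ v
        · exact (top_cell_eq T S h.symm hres.symm v u hv hu hcT).symm
        · have hSbox := box_of_unique_corner S u hu hcS
          have hTbox := box_of_unique_corner T v hv hcT
          by_contra hne
          have hn1 := not_box_le S T u v hu hv hres hne hTbox
          have hn2 := not_box_le T S v u hv hu hres.symm (Ne.symm hne) hSbox
          have hcases : (v.1 < u.1 ∧ u.2 < v.2) ∨ (u.1 < v.1 ∧ v.2 < u.2) := by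
            push_neg at hn1 hn2
            omega
          rcases hcases with ⟨ha, hb⟩ | ⟨ha, hb⟩
          · exact rect_contra (by omega) S T u v hSbox hTbox hu hv hres ha hb
          · exact rect_contra (by omega) T S v u hTbox hSbox hv hu hres.symm ha hb
    subst huv
    apply SYT.ext_entry
    funext x
    rcases eq_or_ne x u with rfl | hx
    · rw [hu, hv]
    · have hS : S.entry x ≤ n := by
        have := S.le_n x
        have : S.entry x ≠ n + 1 := fun hh => hx (S.cell_uniq (by omega) hu x hh)
        omega
      have hT : T.entry x ≤ n := by
        have := T.le_n x
        have : T.entry x ≠ n + 1 := fun hh => hx (T.cell_uniq (by omega) hv x hh)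
        omega
      have := congrFun hres x
      rw [restrict_apply, restrict_apply, if_pos hS, if_pos hT] at this
      exact this

/-- Any standard Young tableau with at least 5 entries can be reconstructed
from its multiset of 1-minors. -/
theorem syt_reconstructible_from_multiset_of_one_minors
    (n : ℕ) (hn : 5 ≤ n) (S T : SYT n)
    (h : minors1M S = minors1M T) : S = T := by
  have h0 : Psi 0 S = Psi 0 T := by
    simp only [Psi, Multiset.replicate_zero, add_zero]
    exact h
  exact key n (by omega) 0 (fun h3 => by omega) (fun h4 => by omega) S T h0
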